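/- arXiv:cs/0001026 — 2 statements merged into one kernel-verified Lean document; each statement's English description precedes it below -/
import Mathlib

section
/- Theorem 6.1: In the language LLNC^self obtained by adding the basic principal expression self (interpreted by ⟦self⟧_{w,l,k} = {k}), the axiom system AX_inf^self is sound and complete with respect to the open semantics if K is infinite, and AX_fin^self is sound and complete with respect to the open semantics if K is finite: a formula φ of LLNC^self is provable in the respective system if and only if φ is o-valid. -/
/-- Principal expressions of LLNC^self: keys, global names, local names,
`self`, and linking `'s`. -/
inductive PExpS (K G N : Type*) where
  | key : K → PExpS K G N
  | glob : G → PExpS K G N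
  | loc : N → PExpS K G N
  | self : PExpS K G N
  | s : PExpS K G N → PExpS K G N → PExpS K G N

/-- Formulas of LLNC^self. -/
inductive FmlS (K G N : Type*) where
  | bdto : PExpS K G N → PExpS K G N → FmlS K G N
  | cert : K → FmlS K G N → FmlS K G N
  | not : FmlS K G N → FmlS K G N
  | and : FmlS K G N → FmlS K G N → FmlS K G N

/-- A world: an interpretation of global names and an assignment of
certificates to keys, with only finitely many certificates issued. -/
structure WorldS (K G N : Type*) where
  beta : G → Set K
  certs : K → Set (FmlS K G N)
  finite_certs : (⋃ k, certs k).Finite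

variable {K G N : Type*}

/-- The interpretation of a principal expression, with `⟦self⟧_{w,l,k} = {k}`. -/
def interpS (w : WorldS K G N) (l : K → N → Set K) : PExpS K G N → K → Set K
  | .key k', _ => {k'}
  | .glob g, _ => w.beta g
  | .loc n, k => l k n
  | .self, k => {k}
  | .s p q, k => ⋃ k' ∈ interpS w l p k, interpS w l q k'

/-- Satisfaction of a formula at a world, local name assignment, and key. -/
def SatS (w : WorldS K G N) (l : K → N → Set K) (k : K) : FmlS K G N → Prop
  | .bdto p q => interpS w l q k ⊆ interpS w l p k
  | .cert k' φ => φ ∈ w.certs k'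
  | .not φ => ¬ SatS w l k φ
  | .and φ ψ => SatS w l k φ ∧ SatS w l k ψ

/-- Consistency of a local name assignment with a world. -/
def ConsistentS (w : WorldS K G N) (l : K → N → Set K) : Prop :=
  ∀ (k : K) (n : N) (p : PExpS K G N),
    FmlS.bdto (.loc n) p ∈ w.certs k → SatS w l k (.bdto (.loc n) p)

/-- `φ` is o-valid: no triple satisfies `¬φ` under the open semantics. -/
def OValidS (φ : FmlS K G N) : Prop :=
  ¬ ∃ (w : WorldS K G N) (l : K → N → Set K) (k : K),
      SatS w l k (.not φ) ∧ ConsistentS w l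

/-- Material implication, as a classical abbreviation. -/
def FmlS.imp (φ ψ : FmlS K G N) : FmlS K G N := .not (.and φ (.not ψ))

/-- Disjunction, as a classical abbreviation. -/
def FmlS.or (φ ψ : FmlS K G N) : FmlS K G N := .not (.and (.not φ) (.not ψ))

/-- Biconditional, as a classical abbreviation. -/
def FmlS.iff (φ ψ : FmlS K G N) : FmlS K G N := .and (φ.imp ψ) (ψ.imp φ)

/-- Boolean evaluation of a formula treating `▷`- and `cert`-formulas as atoms. -/
def evalBS (v : FmlS K G N → Bool) : FmlS K G N → Bool
  | .not φ => !(evalBS v φ)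
  | .and φ ψ => evalBS v φ && evalBS v ψ
  | φ => v φ

/-- `φ` is an instance of a propositional tautology. -/
def TautologyS (φ : FmlS K G N) : Prop := ∀ v : FmlS K G N → Bool, evalBS v φ = true

/-- Global identifiers: keys and global names. -/
def IsGlobalIdS : PExpS K G N → Prop
  | .key _ => True
  | .glob _ => True
  | _ => False

/-- Disjunction of the nonempty list `φ :: l` of formulas. -/
def bigOrS (φ : FmlS K G N) : List (FmlS K G N) → FmlS K G N
  | [] => φ
  | ψ :: rest => φ.or (bigOrS ψ rest)

/-- The disjunction `⋁_{k ∈ K} f k`, where `k₀ :: L` enumerates `K`. -/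
def disjOverS (f : K → FmlS K G N) (k₀ : K) (L : List K) : FmlS K G N :=
  bigOrS (f k₀) (L.map f)

/-- The axiom system `AX_inf^self`: `AX_inf` together with the Identity and
Self-is-key axioms. -/
inductive PrvSInf : FmlS K G N → Prop
  | taut {φ : FmlS K G N} : TautologyS φ → PrvSInf φ
  | refl (p : PExpS K G N) : PrvSInf (.bdto p p)
  | trans (p q r : PExpS K G N) :
      PrvSInf ((FmlS.bdto p q).imp ((FmlS.bdto q r).imp (.bdto p r)))
  | leftMono (p q r : PExpS K G N) :
      PrvSInf ((FmlS.bdto p q).imp (.bdto (p.s r) (q.s r)))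
  | assoc₁ (p q r : PExpS K G N) : PrvSInf (.bdto ((p.s q).s r) (p.s (q.s r)))
  | assoc₂ (p q r : PExpS K G N) : PrvSInf (.bdto (p.s (q.s r)) ((p.s q).s r))
  | keyGlob (k : K) (g : PExpS K G N) (hg : IsGlobalIdS g) :
      PrvSInf (.bdto ((PExpS.key k).s g) g)
  | glob (p : PExpS K G N) (k : K) (g : PExpS K G N) (hg : IsGlobalIdS g) :
      PrvSInf ((FmlS.bdto (p.s (.key k)) (.key k)).imp (.bdto (p.s g) g))
  | convGlob (p g : PExpS K G N) (hg : IsGlobalIdS g) : PrvSInf (.bdto g (p.s g))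
  | keyLink (k : K) (n : N) (r : PExpS K G N) :
      PrvSInf ((FmlS.cert k (.bdto (.loc n) r)).imp
        (.bdto ((PExpS.key k).s (.loc n)) ((PExpS.key k).s r)))
  | nonempA (p : PExpS K G N) (k₁ k : K) :
      PrvSInf ((FmlS.bdto p (.key k₁)).imp (.bdto (p.s (.key k)) (.key k)))
  | nonempB (p q : PExpS K G N) (k : K) :
      PrvSInf ((FmlS.not (.bdto p q)).imp (.bdto (q.s (.key k)) (.key k)))
  | nonempC (p q : PExpS K G N) (k₁ k : K) :
      PrvSInf ((FmlS.bdto (p.s q) (.key k₁)).imp (.bdto (p.s (.key k)) (.key k)))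
  | nonempD (p : PExpS K G N) (k k' : K) :
      PrvSInf ((FmlS.and (.bdto (p.s (.key k)) (.key k)) (.bdto (.key k') p)).imp
        (.bdto p (.key k')))
  | keyDist (k₁ k₂ : K) (hne : k₁ ≠ k₂) : PrvSInf (.not (.bdto (.key k₁) (.key k₂)))
  | identity₁ (p : PExpS K G N) : PrvSInf (.bdto (PExpS.self.s p) p)
  | identity₂ (p : PExpS K G N) : PrvSInf (.bdto p (PExpS.self.s p))
  | identity₃ (p : PExpS K G N) : PrvSInf (.bdto (p.s PExpS.self) p)
  | identity₄ (p : PExpS K G N) : PrvSInf (.bdto p (p.s PExpS.self))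
  | selfIsKey (p : PExpS K G N) (k : K) :
      PrvSInf ((FmlS.and (.bdto PExpS.self p) (.bdto (p.s (.key k)) (.key k))).imp
        (.bdto p PExpS.self))
  | mp {φ ψ : FmlS K G N} : PrvSInf φ → PrvSInf (φ.imp ψ) → PrvSInf ψ

/-- The axiom system `AX_fin^self`: `AX_fin` together with the Identity and
Self-is-key axioms. -/
inductive PrvSFin : FmlS K G N → Prop
  | taut {φ : FmlS K G N} : TautologyS φ → PrvSFin φ
  | refl (p : PExpS K G N) : PrvSFin (.bdto p p)
  | trans (p q r : PExpS K G N) :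
      PrvSFin ((FmlS.bdto p q).imp ((FmlS.bdto q r).imp (.bdto p r)))
  | leftMono (p q r : PExpS K G N) :
      PrvSFin ((FmlS.bdto p q).imp (.bdto (p.s r) (q.s r)))
  | assoc₁ (p q r : PExpS K G N) : PrvSFin (.bdto ((p.s q).s r) (p.s (q.s r)))
  | assoc₂ (p q r : PExpS K G N) : PrvSFin (.bdto (p.s (q.s r)) ((p.s q).s r))
  | keyGlob (k : K) (g : PExpS K G N) (hg : IsGlobalIdS g) :
      PrvSFin (.bdto ((PExpS.key k).s g) g)
  | glob (p : PExpS K G N) (k : K) (g : PExpS K G N) (hg : IsGlobalIdS g) :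
      PrvSFin ((FmlS.bdto (p.s (.key k)) (.key k)).imp (.bdto (p.s g) g))
  | convGlob (p g : PExpS K G N) (hg : IsGlobalIdS g) : PrvSFin (.bdto g (p.s g))
  | keyLink (k : K) (n : N) (r : PExpS K G N) :
      PrvSFin ((FmlS.cert k (.bdto (.loc n) r)).imp
        (.bdto ((PExpS.key k).s (.loc n)) ((PExpS.key k).s r)))
  | nonempA (p : PExpS K G N) (k₁ k : K) :
      PrvSFin ((FmlS.bdto p (.key k₁)).imp (.bdto (p.s (.key k)) (.key k)))
  | nonempB (p q : PExpS K G N) (k : K) :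
      PrvSFin ((FmlS.not (.bdto p q)).imp (.bdto (q.s (.key k)) (.key k)))
  | nonempC (p q : PExpS K G N) (k₁ k : K) :
      PrvSFin ((FmlS.bdto (p.s q) (.key k₁)).imp (.bdto (p.s (.key k)) (.key k)))
  | nonempD (p : PExpS K G N) (k k' : K) :
      PrvSFin ((FmlS.and (.bdto (p.s (.key k)) (.key k)) (.bdto (.key k') p)).imp
        (.bdto p (.key k')))
  | keyDist (k₁ k₂ : K) (hne : k₁ ≠ k₂) : PrvSFin (.not (.bdto (.key k₁) (.key k₂)))
  | witnesses₁ (p q : PExpS K G N) (k₀ : K) (L : List K)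
      (hnd : (k₀ :: L).Nodup) (hall : ∀ k : K, k ∈ k₀ :: L) :
      PrvSFin ((FmlS.not (.bdto p q)).imp
        (disjOverS (fun k => FmlS.and (.not (.bdto p (.key k))) (.bdto q (.key k))) k₀ L))
  | witnesses₂ (p q : PExpS K G N) (k₁ : K) (k₀ : K) (L : List K)
      (hnd : (k₀ :: L).Nodup) (hall : ∀ k : K, k ∈ k₀ :: L) :
      PrvSFin ((FmlS.bdto (p.s q) (.key k₁)).imp
        (disjOverS (fun k => FmlS.and (.bdto p (.key k))
          (.bdto ((PExpS.key k).s q) (.key k₁))) k₀ L))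
  | currentPrincipal (nsel : K → N) (lsel : K → K) (k₀ : K) (L : List K)
      (hnd : (k₀ :: L).Nodup) (hall : ∀ k : K, k ∈ k₀ :: L) :
      PrvSFin (disjOverS (fun k => FmlS.iff (.bdto (.loc (nsel k)) (.key (lsel k)))
        (.bdto ((PExpS.key k).s (.loc (nsel k))) (.key (lsel k)))) k₀ L)
  | identity₁ (p : PExpS K G N) : PrvSFin (.bdto (PExpS.self.s p) p)
  | identity₂ (p : PExpS K G N) : PrvSFin (.bdto p (PExpS.self.s p))
  | identity₃ (p : PExpS K G N) : PrvSFin (.bdto (p.s PExpS.self) p)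
  | identity₄ (p : PExpS K G N) : PrvSFin (.bdto p (p.s PExpS.self))
  | selfIsKey (p : PExpS K G N) (k : K) :
      PrvSFin ((FmlS.and (.bdto PExpS.self p) (.bdto (p.s (.key k)) (.key k))).imp
        (.bdto p PExpS.self))
  | mp {φ ψ : FmlS K G N} : PrvSFin φ → PrvSFin (φ.imp ψ) → PrvSFin ψ

/-!
Soundness is a direct check of each axiom against the semantics. For completeness, an unprovable
`φ` is refuted by a valuation making every theorem true (propositional compactness), i.e. by a
maximal consistent theory `T`, and a canonical model of `T` falsifies `φ`; its certificates are the
formulas `k cert ψ` among the subformulas of `φ` that hold in `T`.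

When `K` is finite, the Witness axioms let each expression denote the keys it provably contains,
and they provide a key provably equal to `self`, which serves as the current principal. When `K` is
infinite there are no such axioms; instead every expression over the symbols of `φ` that is
nonempty but not provably a named key gets a fresh key of its own, and an expression denotes the
keys standing for the expressions below it.
-/

structure FmlS.IsValuation (P : FmlS K G N → Prop) : Prop where
  not_iff (ψ : FmlS K G N) : P (.not ψ) ↔ ¬ P ψ
  and_iff (ψ χ : FmlS K G N) : P (.and ψ χ) ↔ P ψ ∧ P χ

namespace FmlS.IsValuation

variable {P : FmlS K G N → Prop} (hP : FmlS.IsValuation P)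
include hP

theorem imp_iff (ψ χ : FmlS K G N) : P (ψ.imp χ) ↔ (P ψ → P χ) := by
  rw [FmlS.imp, hP.not_iff, hP.and_iff, hP.not_iff]; tauto

theorem or_iff (ψ χ : FmlS K G N) : P (ψ.or χ) ↔ P ψ ∨ P χ := by
  rw [FmlS.or, hP.not_iff, hP.and_iff, hP.not_iff, hP.not_iff]; tauto

theorem iff_iff (ψ χ : FmlS K G N) : P (ψ.iff χ) ↔ (P ψ ↔ P χ) := by
  rw [FmlS.iff, hP.and_iff, hP.imp_iff, hP.imp_iff]; tauto

theorem bigOrS_iff (ψ : FmlS K G N) (L : List (FmlS K G N)) :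
    P (bigOrS ψ L) ↔ P ψ ∨ ∃ χ ∈ L, P χ := by
  induction L generalizing ψ with
  | nil => simp [bigOrS]
  | cons χ L ih => simp [bigOrS, hP.or_iff, ih]

theorem disjOverS_iff (f : K → FmlS K G N) (k₀ : K) (L : List K) :
    P (disjOverS f k₀ L) ↔ ∃ k ∈ k₀ :: L, P (f k) := by
  simp [disjOverS, hP.bigOrS_iff]

open Classical in
theorem evalBS_decide (ψ : FmlS K G N) :
    evalBS (fun χ => decide (P χ)) ψ = decide (P ψ) := by
  induction ψ with
  | bdto => rfl
  | cert => rfl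
  | not ψ ih => simp [evalBS, ih, hP.not_iff ψ]
  | and ψ χ ihψ ihχ => simp [evalBS, ihψ, ihχ, hP.and_iff ψ χ]

theorem of_tautologyS {ψ : FmlS K G N} (h : TautologyS ψ) : P ψ := by
  classical
  simpa [hP.evalBS_decide] using h fun χ => decide (P χ)

end FmlS.IsValuation

theorem FmlS.isValuation_evalBS (v : FmlS K G N → Bool) :
    FmlS.IsValuation fun ψ => evalBS v ψ = true where
  not_iff _ := by simp [evalBS]
  and_iff _ _ := by simp [evalBS]

theorem isValuation_satS (w : WorldS K G N) (l : K → N → Set K) (k : K) :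
    FmlS.IsValuation (SatS w l k) where
  not_iff _ := Iff.rfl
  and_iff _ _ := Iff.rfl

section Semantics

variable {w : WorldS K G N} {l : K → N → Set K}

theorem satS_bdto {p q : PExpS K G N} {k : K} :
    SatS w l k (.bdto p q) ↔ interpS w l q k ⊆ interpS w l p k := Iff.rfl

theorem satS_imp {ψ χ : FmlS K G N} {k : K} :
    SatS w l k (ψ.imp χ) ↔ (SatS w l k ψ → SatS w l k χ) :=
  (isValuation_satS w l k).imp_iff ψ χ

theorem interpS_s (p q : PExpS K G N) (k : K) :
    interpS w l (p.s q) k = ⋃ y ∈ interpS w l p k, interpS w l q y := rfl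

theorem interpS_key_s (k' : K) (p : PExpS K G N) (k : K) :
    interpS w l ((PExpS.key k').s p) k = interpS w l p k' := by
  simp [interpS]

theorem mem_interpS_s {p q : PExpS K G N} {k x : K} :
    x ∈ interpS w l (p.s q) k ↔ ∃ y ∈ interpS w l p k, x ∈ interpS w l q y := by
  simp [interpS]

theorem interpS_s_assoc (p q r : PExpS K G N) (k : K) :
    interpS w l ((p.s q).s r) k = interpS w l (p.s (q.s r)) k := by
  simp only [interpS, Set.biUnion_iUnion]

theorem interpS_self_s (p : PExpS K G N) (k : K) :
    interpS w l (PExpS.self.s p) k = interpS w l p k := by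
  simp [interpS]

theorem interpS_s_self (p : PExpS K G N) (k : K) :
    interpS w l (p.s .self) k = interpS w l p k := by
  ext; simp [interpS]

theorem interpS_of_isGlobalIdS {g : PExpS K G N} (hg : IsGlobalIdS g) (k k' : K) :
    interpS w l g k = interpS w l g k' := by
  cases g <;> first | rfl | exact hg.elim

theorem interpS_s_subset_of_isGlobalIdS {g : PExpS K G N} (hg : IsGlobalIdS g)
    (p : PExpS K G N) (k : K) : interpS w l (p.s g) k ⊆ interpS w l g k := by
  intro x hx
  obtain ⟨y, -, hx⟩ := mem_interpS_s.mp hx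
  rwa [interpS_of_isGlobalIdS hg y k] at hx

theorem interpS_s_of_isGlobalIdS {g : PExpS K G N} (hg : IsGlobalIdS g) {p : PExpS K G N}
    {k : K} (hp : (interpS w l p k).Nonempty) : interpS w l (p.s g) k = interpS w l g k := by
  refine (interpS_s_subset_of_isGlobalIdS hg p k).antisymm fun x hx => ?_
  obtain ⟨y, hy⟩ := hp
  exact mem_interpS_s.mpr ⟨y, hy, by rwa [interpS_of_isGlobalIdS hg y k]⟩

theorem satS_s_key_bdto_key {p : PExpS K G N} {k k' : K} :
    SatS w l k (.bdto (p.s (.key k')) (.key k')) ↔ (interpS w l p k).Nonempty := by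
  refine ⟨fun h => ?_, fun h => (interpS_s_of_isGlobalIdS (g := .key k') trivial h).ge⟩
  obtain ⟨y, hy, -⟩ := mem_interpS_s.mp (h rfl)
  exact ⟨y, hy⟩

end Semantics

theorem PrvSFin.satS {φ : FmlS K G N} (h : PrvSFin φ) {w : WorldS K G N} {l : K → N → Set K}
    (hl : ConsistentS w l) (k : K) : SatS w l k φ := by
  induction h generalizing k with
  | taut ht => exact (isValuation_satS w l k).of_tautologyS ht
  | refl p => exact subset_rfl
  | trans p q r => simp only [satS_imp, satS_bdto]; exact fun hpq hqr => hqr.trans hpq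
  | leftMono p q r =>
    simp only [satS_imp, satS_bdto, interpS_s]; exact Set.biUnion_subset_biUnion_left
  | assoc₁ p q r => exact (interpS_s_assoc p q r k).ge
  | assoc₂ p q r => exact (interpS_s_assoc p q r k).le
  | keyGlob k' g hg => exact (interpS_s_of_isGlobalIdS hg (p := .key k') (k := k) ⟨k', rfl⟩).ge
  | glob p k' g hg =>
    simp only [satS_imp, satS_s_key_bdto_key]; exact fun hp => (interpS_s_of_isGlobalIdS hg hp).ge
  | convGlob p g hg => exact interpS_s_subset_of_isGlobalIdS hg p k
  | keyLink k' n r =>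
    simp only [satS_imp, satS_bdto, interpS_key_s]; exact fun hc => hl k' n r hc
  | nonempA p k₁ k' => simp only [satS_imp, satS_s_key_bdto_key]; exact fun hp => ⟨k₁, hp rfl⟩
  | nonempB p q k' =>
    simp only [satS_imp, satS_s_key_bdto_key]
    exact fun hpq => (Set.nonempty_of_not_subset hpq).mono Set.sdiff_subset
  | nonempC p q k₁ k' =>
    simp only [satS_imp, satS_s_key_bdto_key]
    intro hpq
    obtain ⟨y, hy, -⟩ := mem_interpS_s.mp (hpq rfl)
    exact ⟨y, hy⟩
  | nonempD p k' k'' =>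
    rw [satS_imp, (isValuation_satS w l k).and_iff, satS_s_key_bdto_key]
    exact fun ⟨hp, hk⟩ => ((hp.subset_singleton_iff).mp hk).ge
  | keyDist k₁ k₂ hne =>
    simp only [SatS, interpS, Set.singleton_subset_singleton]; exact fun h => hne h.symm
  | witnesses₁ p q k₀ L _ hall =>
    simp only [satS_imp, (isValuation_satS w l k).disjOverS_iff]
    intro hpq
    obtain ⟨x, hq, hp⟩ := Set.not_subset.mp hpq
    exact ⟨x, hall x, by simpa [SatS, interpS] using ⟨hp, hq⟩⟩
  | witnesses₂ p q k₁ k₀ L _ hall =>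
    simp only [satS_imp, (isValuation_satS w l k).disjOverS_iff]
    intro hpq
    obtain ⟨y, hy, hk₁⟩ := mem_interpS_s.mp (hpq rfl)
    exact ⟨y, hall y, by simpa [SatS, interpS_key_s, interpS] using ⟨hy, hk₁⟩⟩
  | currentPrincipal nsel lsel k₀ L _ hall =>
    simp only [(isValuation_satS w l k).disjOverS_iff, (isValuation_satS w l k).iff_iff,
      satS_bdto, interpS_key_s]
    exact ⟨k, hall k, Iff.rfl⟩
  | identity₁ p => exact (interpS_self_s p k).ge
  | identity₂ p => exact (interpS_self_s p k).le
  | identity₃ p => exact (interpS_s_self p k).ge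
  | identity₄ p => exact (interpS_s_self p k).le
  | selfIsKey p k' =>
    rw [satS_imp, (isValuation_satS w l k).and_iff, satS_s_key_bdto_key]
    exact fun ⟨hk, hp⟩ => ((hp.subset_singleton_iff).mp hk).ge
  | mp _ _ ih₁ ih₂ => exact satS_imp.mp (ih₂ k) (ih₁ k)

theorem PrvSFin.oValidS {φ : FmlS K G N} (h : PrvSFin φ) : OValidS φ :=
  fun ⟨_, _, k, hφ, hl⟩ => hφ (h.satS hl k)

theorem PrvSInf.toPrvSFin {φ : FmlS K G N} (h : PrvSInf φ) : PrvSFin φ := by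
  induction h with
  | taut ht => exact .taut ht
  | refl p => exact .refl p
  | trans p q r => exact .trans p q r
  | leftMono p q r => exact .leftMono p q r
  | assoc₁ p q r => exact .assoc₁ p q r
  | assoc₂ p q r => exact .assoc₂ p q r
  | keyGlob k g hg => exact .keyGlob k g hg
  | glob p k g hg => exact .glob p k g hg
  | convGlob p g hg => exact .convGlob p g hg
  | keyLink k n r => exact .keyLink k n r
  | nonempA p k₁ k => exact .nonempA p k₁ k
  | nonempB p q k => exact .nonempB p q k
  | nonempC p q k₁ k => exact .nonempC p q k₁ k
  | nonempD p k k' => exact .nonempD p k k'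
  | keyDist k₁ k₂ hne => exact .keyDist k₁ k₂ hne
  | identity₁ p => exact .identity₁ p
  | identity₂ p => exact .identity₂ p
  | identity₃ p => exact .identity₃ p
  | identity₄ p => exact .identity₄ p
  | selfIsKey p k => exact .selfIsKey p k
  | mp _ _ ih₁ ih₂ => exact .mp ih₁ ih₂

theorem continuous_evalBS (ψ : FmlS K G N) :
    Continuous fun v : FmlS K G N → Bool => evalBS v ψ := by
  induction ψ with
  | bdto p q => exact continuous_apply _
  | cert k ψ _ => exact continuous_apply _
  | not ψ ih => exact continuous_of_discreteTopology.comp ih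
  | and ψ χ ihψ ihχ =>
    exact (continuous_of_discreteTopology (f := fun b : Bool × Bool => b.1 && b.2)).comp
      (ihψ.prodMk ihχ)

theorem exists_evalBS_of_not_prv {Prv : FmlS K G N → Prop}
    (taut : ∀ {ψ}, TautologyS ψ → Prv ψ) (mp : ∀ {ψ χ}, Prv ψ → Prv (ψ.imp χ) → Prv χ)
    {φ : FmlS K G N} (hφ : ¬ Prv φ) :
    ∃ v : FmlS K G N → Bool, (∀ ψ, Prv ψ → evalBS v ψ = true) ∧ evalBS v φ = false := by
  have hv := FmlS.isValuation_evalBS (K := K) (G := G) (N := N)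
  let S : {ψ // Prv ψ} → Set (FmlS K G N → Bool) :=
    fun ψ => {v | evalBS v ψ.1 = true ∧ evalBS v φ = false}
  have hclosed ψ : IsClosed (S ψ) :=
    (isClosed_eq (continuous_evalBS _) continuous_const).inter
      (isClosed_eq (continuous_evalBS _) continuous_const)
  have hne ψ : (S ψ).Nonempty := by
    by_contra h
    refine hφ (mp ψ.2 (taut fun v => ?_))
    simp only [Set.not_nonempty_iff_eq_empty, Set.eq_empty_iff_forall_notMem, S,
      Set.mem_ofPred, not_and, Bool.not_eq_false] at h
    exact ((hv v).imp_iff _ _).mpr (h v)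
  have hdir : Directed (· ⊇ ·) S := fun ψ χ => by
    refine ⟨⟨ψ.1.and χ.1, mp χ.2 (mp ψ.2 (taut fun v => ?_))⟩, ?_, ?_⟩
    · simp only [(hv v).imp_iff, (hv v).and_iff]; tauto
    all_goals
      intro v hv'
      simp only [S, Set.mem_ofPred, (hv v).and_iff] at hv' ⊢
      tauto
  have : Nonempty {ψ // Prv ψ} := ⟨⟨_, taut fun v => ((hv v).imp_iff φ φ).mpr id⟩⟩
  obtain ⟨v, hvS⟩ := IsCompact.nonempty_iInter_of_directed_nonempty_isCompact_isClosed S hdir hne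
    (fun ψ => (hclosed ψ).isCompact) hclosed
  simp only [Set.mem_iInter] at hvS
  exact ⟨v, fun ψ hψ => (hvS ⟨ψ, hψ⟩).1, (hvS (Classical.arbitrary _)).2⟩

def PExpS.SelfOnly : PExpS K G N → Prop
  | .self => True
  | .s p q => p.SelfOnly ∧ q.SelfOnly
  | _ => False

theorem interpS_of_selfOnly {e : PExpS K G N} (he : e.SelfOnly) (w : WorldS K G N)
    (l : K → N → Set K) (k : K) : interpS w l e k = {k} := by
  induction e generalizing k with
  | self => rfl
  | s a b iha ihb => simp [interpS_s, iha he.1, ihb he.2]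
  | _ => exact he.elim

theorem interpS_s_of_selfOnly_left {e : PExpS K G N} (he : e.SelfOnly) (p : PExpS K G N)
    (w : WorldS K G N) (l : K → N → Set K) (k : K) : interpS w l (e.s p) k = interpS w l p k := by
  simp [interpS_s, interpS_of_selfOnly he]

theorem interpS_s_of_selfOnly_right {e : PExpS K G N} (he : e.SelfOnly) (p : PExpS K G N)
    (w : WorldS K G N) (l : K → N → Set K) (k : K) : interpS w l (p.s e) k = interpS w l p k := by
  ext; simp [interpS_s, interpS_of_selfOnly he]

/-- A maximal consistent extension of `AX_inf^self`. -/
structure AxSelfTheory (K G N : Type*) where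
  Holds : FmlS K G N → Prop
  isValuation : FmlS.IsValuation Holds
  holds_of_prvSInf {ψ : FmlS K G N} : PrvSInf ψ → Holds ψ

notation:50 p:51 " ▷[" T "] " q:51 => AxSelfTheory.Holds T (FmlS.bdto p q)

namespace AxSelfTheory

def Equiv (T : AxSelfTheory K G N) (p q : PExpS K G N) : Prop := p ▷[T] q ∧ q ▷[T] p

notation:50 p:51 " ≈[" T "] " q:51 => AxSelfTheory.Equiv T p q

/-- `p` provably denotes a nonempty set of keys. -/
def IsNonempty (T : AxSelfTheory K G N) (p : PExpS K G N) : Prop :=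
  ∀ k, p.s (.key k) ▷[T] .key k

theorem exists_not_holds {Prv : FmlS K G N → Prop} (taut : ∀ {ψ}, TautologyS ψ → Prv ψ)
    (mp : ∀ {ψ χ}, Prv ψ → Prv (ψ.imp χ) → Prv χ) (hinf : ∀ {ψ}, PrvSInf ψ → Prv ψ)
    {φ : FmlS K G N} (hφ : ¬ Prv φ) :
    ∃ T : AxSelfTheory K G N, (∀ ψ, Prv ψ → T.Holds ψ) ∧ ¬ T.Holds φ := by
  obtain ⟨v, hv, hvφ⟩ := exists_evalBS_of_not_prv taut mp hφ
  exact ⟨⟨_, FmlS.isValuation_evalBS v, fun h => hv _ (hinf h)⟩, hv, by simp [hvφ]⟩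

variable (T : AxSelfTheory K G N) {p q r : PExpS K G N}

theorem mp {ψ χ : FmlS K G N} (h : T.Holds (ψ.imp χ)) (hψ : T.Holds ψ) : T.Holds χ :=
  (T.isValuation.imp_iff ψ χ).mp h hψ

theorem bd_refl (p : PExpS K G N) : p ▷[T] p := T.holds_of_prvSInf (.refl p)

theorem bd_trans (hpq : p ▷[T] q) (hqr : q ▷[T] r) : p ▷[T] r :=
  T.mp (T.mp (T.holds_of_prvSInf (.trans p q r)) hpq) hqr

theorem s_bd_s (r : PExpS K G N) (h : p ▷[T] q) : p.s r ▷[T] q.s r :=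
  T.mp (T.holds_of_prvSInf (.leftMono p q r)) h

theorem equiv_refl (p : PExpS K G N) : p ≈[T] p := ⟨T.bd_refl p, T.bd_refl p⟩

theorem Equiv.symm {T : AxSelfTheory K G N} (h : p ≈[T] q) : q ≈[T] p := ⟨h.2, h.1⟩

theorem Equiv.trans {T : AxSelfTheory K G N} (hpq : p ≈[T] q) (hqr : q ≈[T] r) : p ≈[T] r :=
  ⟨T.bd_trans hpq.1 hqr.1, T.bd_trans hqr.2 hpq.2⟩

theorem Equiv.s_left {T : AxSelfTheory K G N} (r : PExpS K G N) (h : p ≈[T] q) :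
    p.s r ≈[T] q.s r :=
  ⟨T.s_bd_s r h.1, T.s_bd_s r h.2⟩

theorem Equiv.bd_iff_left {T : AxSelfTheory K G N} (h : p ≈[T] q) : p ▷[T] r ↔ q ▷[T] r :=
  ⟨T.bd_trans h.2, T.bd_trans h.1⟩

theorem s_assoc (p q r : PExpS K G N) : (p.s q).s r ≈[T] p.s (q.s r) :=
  ⟨T.holds_of_prvSInf (.assoc₁ p q r), T.holds_of_prvSInf (.assoc₂ p q r)⟩

theorem self_s (p : PExpS K G N) : PExpS.self.s p ≈[T] p :=
  ⟨T.holds_of_prvSInf (.identity₁ p), T.holds_of_prvSInf (.identity₂ p)⟩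

theorem s_self (p : PExpS K G N) : p.s .self ≈[T] p :=
  ⟨T.holds_of_prvSInf (.identity₃ p), T.holds_of_prvSInf (.identity₄ p)⟩

theorem key_s_bd (k : K) {g : PExpS K G N} (hg : IsGlobalIdS g) : (PExpS.key k).s g ▷[T] g :=
  T.holds_of_prvSInf (.keyGlob k g hg)

theorem bd_s (p : PExpS K G N) {g : PExpS K G N} (hg : IsGlobalIdS g) : g ▷[T] p.s g :=
  T.holds_of_prvSInf (.convGlob p g hg)

theorem eq_of_key_bd_key {k₁ k₂ : K} (h : .key k₁ ▷[T] .key k₂) : k₁ = k₂ := by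
  by_contra hne
  exact (T.isValuation.not_iff _).mp (T.holds_of_prvSInf (.keyDist k₁ k₂ hne)) h

theorem key_s_equiv (k : K) {g : PExpS K G N} (hg : IsGlobalIdS g) :
    (PExpS.key k).s g ≈[T] g :=
  ⟨T.key_s_bd k hg, T.bd_s _ hg⟩

theorem key_bd_key_iff {k₁ k₂ : K} : .key k₁ ▷[T] .key k₂ ↔ k₁ = k₂ :=
  ⟨T.eq_of_key_bd_key, by rintro rfl; exact T.bd_refl _⟩

theorem key_s_loc_bd {k : K} {n : N} (h : T.Holds (.cert k (.bdto (.loc n) r))) :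
    (PExpS.key k).s (.loc n) ▷[T] (PExpS.key k).s r :=
  T.mp (T.holds_of_prvSInf (.keyLink k n r)) h

theorem isNonempty_key (k : K) : T.IsNonempty (.key k) := fun _ => T.key_s_bd k trivial

theorem isNonempty_self : T.IsNonempty .self := fun _ => (T.self_s _).1

theorem IsNonempty.mono {T : AxSelfTheory K G N} (h : p ▷[T] q) (hq : T.IsNonempty q) :
    T.IsNonempty p :=
  fun k => T.bd_trans (T.s_bd_s _ h) (hq k)

theorem isNonempty_of_not_bd (h : ¬ p ▷[T] q) : T.IsNonempty q :=
  fun k => T.mp (T.holds_of_prvSInf (.nonempB p q k)) ((T.isValuation.not_iff _).mpr h)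

theorem IsNonempty.of_s {T : AxSelfTheory K G N} (h : T.IsNonempty (p.s q)) : T.IsNonempty p :=
  fun k => T.mp (T.holds_of_prvSInf (.nonempC p (q.s (.key k)) k k))
    (T.bd_trans (T.s_assoc p q _).2 (h k))

theorem IsNonempty.s_equiv [Nonempty K] {T : AxSelfTheory K G N} (hp : T.IsNonempty p)
    {g : PExpS K G N} (hg : IsGlobalIdS g) : p.s g ≈[T] g :=
  ⟨T.mp (T.holds_of_prvSInf (.glob p (Classical.arbitrary K) g hg)) (hp _), T.bd_s p hg⟩

theorem bd_key_of_key_bd {k : K} (hp : T.IsNonempty p) (h : .key k ▷[T] p) : p ▷[T] .key k :=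
  T.mp (T.holds_of_prvSInf (.nonempD p k k)) ((T.isValuation.and_iff _ _).mpr ⟨hp k, h⟩)

theorem bd_self_of_self_bd [Nonempty K] (hp : T.IsNonempty p) (h : .self ▷[T] p) :
    p ▷[T] .self :=
  T.mp (T.holds_of_prvSInf (.selfIsKey p (Classical.arbitrary K)))
    ((T.isValuation.and_iff _ _).mpr ⟨h, hp _⟩)

theorem s_equiv_of_selfOnly {e : PExpS K G N} (he : e.SelfOnly) (p : PExpS K G N) :
    p.s e ≈[T] p := by
  induction e generalizing p with
  | self => exact T.s_self p
  | s a b iha ihb => exact (T.s_assoc p a b).symm.trans ((ihb he.2 _).trans (iha he.1 p))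
  | _ => exact he.elim

theorem equiv_self_of_selfOnly {e : PExpS K G N} (he : e.SelfOnly) : e ≈[T] .self :=
  (T.self_s e).symm.trans (T.s_equiv_of_selfOnly he .self)

end AxSelfTheory

def FmlS.subformulas : FmlS K G N → List (FmlS K G N)
  | .bdto p q => [.bdto p q]
  | .cert k ψ => .cert k ψ :: ψ.subformulas
  | .not ψ => .not ψ :: ψ.subformulas
  | .and ψ χ => .and ψ χ :: (ψ.subformulas ++ χ.subformulas)

theorem FmlS.mem_subformulas_self (ψ : FmlS K G N) : ψ ∈ ψ.subformulas := by
  cases ψ <;> simp [FmlS.subformulas]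

namespace AxSelfTheory

variable (T : AxSelfTheory K G N)

def world (φ : FmlS K G N) (β : G → Set K) : WorldS K G N where
  beta := β
  certs k := {ψ | .cert k ψ ∈ φ.subformulas ∧ T.Holds (.cert k ψ)}
  finite_certs := by
    refine ((φ.subformulas.finite_toSet).image fun | .cert _ ψ => ψ | χ => χ).subset ?_
    rintro ψ ⟨-, ⟨k, rfl⟩, hψ, -⟩
    exact ⟨_, hψ, rfl⟩

variable {T}

theorem satS_world_iff {φ : FmlS K G N} {β : G → Set K} {l : K → N → Set K} {k : K}
    (hbd : ∀ p q, .bdto p q ∈ φ.subformulas →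
      (SatS (T.world φ β) l k (.bdto p q) ↔ p ▷[T] q)) :
    SatS (T.world φ β) l k φ ↔ T.Holds φ := by
  suffices ∀ ψ, ψ.subformulas ⊆ φ.subformulas → (SatS (T.world φ β) l k ψ ↔ T.Holds ψ) from
    this φ (List.Subset.refl _)
  intro ψ hψ
  induction ψ with
  | bdto p q => exact hbd p q (hψ (FmlS.mem_subformulas_self _))
  | cert k' χ => exact and_iff_right (hψ (FmlS.mem_subformulas_self _))
  | not χ ih =>
    rw [(isValuation_satS _ l k).not_iff, T.isValuation.not_iff,
      ih fun _ h => hψ (List.mem_cons_of_mem _ h)]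
  | and χ₁ χ₂ ih₁ ih₂ =>
    rw [(isValuation_satS _ l k).and_iff, T.isValuation.and_iff,
      ih₁ fun _ h => hψ (List.mem_cons_of_mem _ (List.mem_append_left _ h)),
      ih₂ fun _ h => hψ (List.mem_cons_of_mem _ (List.mem_append_right _ h))]

theorem consistentS_world {φ : FmlS K G N} {β : G → Set K} {l : K → N → Set K}
    (h : ∀ k n p, .cert k (.bdto (.loc n) p) ∈ φ.subformulas →
      (PExpS.key k).s (.loc n) ▷[T] (PExpS.key k).s p → interpS (T.world φ β) l p k ⊆ l k n) :
    ConsistentS (T.world φ β) l :=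
  fun k n p ⟨hsub, hc⟩ => h k n p hsub (T.key_s_loc_bd hc)

end AxSelfTheory

theorem exists_cons_nodup_mem_all (K : Type*) [Finite K] [Nonempty K] :
    ∃ (k₀ : K) (L : List K), (k₀ :: L).Nodup ∧ ∀ k, k ∈ k₀ :: L := by
  obtain ⟨_ | ⟨k₀, L⟩, hnd, hall⟩ := Finite.exists_univ_list K
  · exact (List.not_mem_nil (hall (Classical.arbitrary K))).elim
  · exact ⟨k₀, L, hnd, hall⟩

namespace AxSelfTheory

def finBeta (T : AxSelfTheory K G N) (g : G) : Set K :=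
  {k | .glob g ▷[T] .key k}

def finLoc (T : AxSelfTheory K G N) (k : K) (n : N) : Set K :=
  {k' | (PExpS.key k).s (.loc n) ▷[T] .key k'}

theorem exists_of_holds_disjOverS [Finite K] [Nonempty K] {T : AxSelfTheory K G N}
    {f : K → FmlS K G N}
    (h : ∀ k₀ L, (k₀ :: L).Nodup → (∀ k, k ∈ k₀ :: L) → T.Holds (disjOverS f k₀ L)) :
    ∃ k, T.Holds (f k) := by
  obtain ⟨k₀, L, hnd, hall⟩ := exists_cons_nodup_mem_all K
  obtain ⟨k, -, hk⟩ := (T.isValuation.disjOverS_iff f k₀ L).mp (h k₀ L hnd hall)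
  exact ⟨k, hk⟩

section Finite

variable [Finite K] [Nonempty K] {T : AxSelfTheory K G N} (hT : ∀ ψ, PrvSFin ψ → T.Holds ψ)
include hT

theorem exists_key_of_not_bd {p q : PExpS K G N} (h : ¬ p ▷[T] q) :
    ∃ k, ¬ p ▷[T] .key k ∧ q ▷[T] .key k := by
  obtain ⟨k, hk⟩ := exists_of_holds_disjOverS fun k₀ L hnd hall =>
    T.mp (hT _ (.witnesses₁ p q k₀ L hnd hall)) ((T.isValuation.not_iff _).mpr h)
  exact ⟨k, by simpa [T.isValuation.and_iff, T.isValuation.not_iff] using hk⟩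

theorem exists_key_of_s_bd {p q : PExpS K G N} {k₁ : K} (h : p.s q ▷[T] .key k₁) :
    ∃ k, p ▷[T] .key k ∧ (PExpS.key k).s q ▷[T] .key k₁ := by
  obtain ⟨k, hk⟩ := exists_of_holds_disjOverS fun k₀ L hnd hall =>
    T.mp (hT _ (.witnesses₂ p q k₁ k₀ L hnd hall)) h
  exact ⟨k, (T.isValuation.and_iff _ _).mp hk⟩

theorem bd_iff_forall_key {p q : PExpS K G N} :
    p ▷[T] q ↔ ∀ k, q ▷[T] .key k → p ▷[T] .key k := by
  refine ⟨fun h k => T.bd_trans h, fun h => ?_⟩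
  by_contra hpq
  obtain ⟨k, hp, hq⟩ := exists_key_of_not_bd hT hpq
  exact hp (h k hq)

theorem mem_interpS_finWorld {φ : FmlS K G N} (p : PExpS K G N) (k' k : K) :
    k ∈ interpS (T.world φ T.finBeta) T.finLoc p k' ↔ (PExpS.key k').s p ▷[T] .key k := by
  induction p generalizing k' k with
  | key k₂ =>
    rw [(T.key_s_equiv k' (g := .key k₂) trivial).bd_iff_left, T.key_bd_key_iff]
    exact eq_comm
  | glob g => exact (T.key_s_equiv k' (g := .glob g) trivial).bd_iff_left.symm
  | loc n => exact Iff.rfl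
  | self =>
    rw [(T.s_self _).bd_iff_left, T.key_bd_key_iff]
    exact eq_comm
  | s p q ihp ihq =>
    rw [mem_interpS_s, ← (T.s_assoc _ p q).bd_iff_left]
    simp only [ihp, ihq]
    exact ⟨fun ⟨_, hy, hk⟩ => T.bd_trans (T.s_bd_s q hy) hk, exists_key_of_s_bd hT⟩

theorem exists_key_equiv_self : ∃ k, .key k ≈[T] .self := by
  obtain ⟨k, hk, -⟩ := exists_key_of_s_bd hT (T.self_s (.key (Classical.arbitrary K))).1
  exact ⟨k, T.bd_self_of_self_bd (T.isNonempty_key k) hk, hk⟩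

theorem exists_model_of_finite (φ : FmlS K G N) :
    ∃ w l k, ConsistentS w l ∧ (SatS w l k φ ↔ T.Holds φ) := by
  obtain ⟨k₀, hk₀⟩ := exists_key_equiv_self hT
  have hmem p k : k ∈ interpS (T.world φ T.finBeta) T.finLoc p k₀ ↔ p ▷[T] .key k := by
    rw [mem_interpS_finWorld hT, ((hk₀.s_left p).trans (T.self_s p)).bd_iff_left]
  refine ⟨T.world φ T.finBeta, T.finLoc, k₀, consistentS_world fun k n p _ h x hx => ?_,
    satS_world_iff fun p q _ => ?_⟩
  · exact T.bd_trans h ((mem_interpS_finWorld hT p k x).mp hx)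
  · rw [satS_bdto, bd_iff_forall_key hT]
    simp only [Set.subset_def, hmem]

end Finite

end AxSelfTheory

def PExpS.Over (Ks : Set K) (Gs : Set G) (Ns : Set N) : PExpS K G N → Prop
  | .key k => k ∈ Ks
  | .glob g => g ∈ Gs
  | .loc n => n ∈ Ns
  | .self => True
  | .s p q => p.Over Ks Gs Ns ∧ q.Over Ks Gs Ns

def FmlS.Over (Ks : Set K) (Gs : Set G) (Ns : Set N) : FmlS K G N → Prop
  | .bdto p q => p.Over Ks Gs Ns ∧ q.Over Ks Gs Ns
  | .cert k ψ => k ∈ Ks ∧ ψ.Over Ks Gs Ns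
  | .not ψ => ψ.Over Ks Gs Ns
  | .and ψ χ => ψ.Over Ks Gs Ns ∧ χ.Over Ks Gs Ns

section Over

variable {Ks Ks' : Set K} {Gs Gs' : Set G} {Ns Ns' : Set N}

theorem PExpS.Over.mono (hK : Ks ⊆ Ks') (hG : Gs ⊆ Gs') (hN : Ns ⊆ Ns') :
    ∀ {p : PExpS K G N}, p.Over Ks Gs Ns → p.Over Ks' Gs' Ns'
  | .key _, h => hK h
  | .glob _, h => hG h
  | .loc _, h => hN h
  | .self, h => h
  | .s _ _, h => ⟨h.1.mono hK hG hN, h.2.mono hK hG hN⟩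

theorem FmlS.Over.mono (hK : Ks ⊆ Ks') (hG : Gs ⊆ Gs') (hN : Ns ⊆ Ns') {ψ : FmlS K G N}
    (h : ψ.Over Ks Gs Ns) : ψ.Over Ks' Gs' Ns' := by
  induction ψ with
  | bdto p q => exact ⟨h.1.mono hK hG hN, h.2.mono hK hG hN⟩
  | cert k ψ ih => exact ⟨hK h.1, ih h.2⟩
  | not ψ ih => exact ih h
  | and ψ χ ihψ ihχ => exact ⟨ihψ h.1, ihχ h.2⟩

theorem FmlS.Over.of_mem_subformulas {φ ψ : FmlS K G N} (hφ : φ.Over Ks Gs Ns)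
    (hψ : ψ ∈ φ.subformulas) : ψ.Over Ks Gs Ns := by
  induction φ with
  | bdto p q => simp_all [FmlS.subformulas]
  | cert k χ ih =>
    rcases List.mem_cons.mp hψ with rfl | hψ
    exacts [hφ, ih hφ.2 hψ]
  | not χ ih =>
    rcases List.mem_cons.mp hψ with rfl | hψ
    exacts [hφ, ih hφ hψ]
  | and χ₁ χ₂ ih₁ ih₂ =>
    rcases List.mem_cons.mp hψ with rfl | hψ
    · exact hφ
    · rcases List.mem_append.mp hψ with hψ | hψ
      exacts [ih₁ hφ.1 hψ, ih₂ hφ.2 hψ]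

end Over

theorem PExpS.exists_finite_over (p : PExpS K G N) :
    ∃ (Ks : Set K) (Gs : Set G) (Ns : Set N), Ks.Finite ∧ Gs.Finite ∧ Ns.Finite ∧
      p.Over Ks Gs Ns := by
  induction p with
  | key k => exact ⟨{k}, ∅, ∅, Set.finite_singleton k, Set.finite_empty, Set.finite_empty, rfl⟩
  | glob g => exact ⟨∅, {g}, ∅, Set.finite_empty, Set.finite_singleton g, Set.finite_empty, rfl⟩
  | loc n => exact ⟨∅, ∅, {n}, Set.finite_empty, Set.finite_empty, Set.finite_singleton n, rfl⟩
  | self => exact ⟨∅, ∅, ∅, Set.finite_empty, Set.finite_empty, Set.finite_empty, trivial⟩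
  | s p q ihp ihq =>
    obtain ⟨Ks, Gs, Ns, hK, hG, hN, hp⟩ := ihp
    obtain ⟨Ks', Gs', Ns', hK', hG', hN', hq⟩ := ihq
    exact ⟨Ks ∪ Ks', Gs ∪ Gs', Ns ∪ Ns', hK.union hK', hG.union hG', hN.union hN',
      hp.mono Set.subset_union_left Set.subset_union_left Set.subset_union_left,
      hq.mono Set.subset_union_right Set.subset_union_right Set.subset_union_right⟩

theorem FmlS.exists_finite_over (φ : FmlS K G N) :
    ∃ (Ks : Set K) (Gs : Set G) (Ns : Set N), Ks.Finite ∧ Gs.Finite ∧ Ns.Finite ∧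
      φ.Over Ks Gs Ns := by
  induction φ with
  | bdto p q =>
    obtain ⟨Ks, Gs, Ns, hK, hG, hN, hp⟩ := p.exists_finite_over
    obtain ⟨Ks', Gs', Ns', hK', hG', hN', hq⟩ := q.exists_finite_over
    exact ⟨Ks ∪ Ks', Gs ∪ Gs', Ns ∪ Ns', hK.union hK', hG.union hG', hN.union hN',
      hp.mono Set.subset_union_left Set.subset_union_left Set.subset_union_left,
      hq.mono Set.subset_union_right Set.subset_union_right Set.subset_union_right⟩
  | cert k ψ ih =>
    obtain ⟨Ks, Gs, Ns, hK, hG, hN, hψ⟩ := ih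
    exact ⟨insert k Ks, Gs, Ns, hK.insert k, hG, hN, Set.mem_insert k Ks,
      hψ.mono (Set.subset_insert k Ks) subset_rfl subset_rfl⟩
  | not ψ ih => exact ih
  | and ψ χ ihψ ihχ =>
    obtain ⟨Ks, Gs, Ns, hK, hG, hN, hψ⟩ := ihψ
    obtain ⟨Ks', Gs', Ns', hK', hG', hN', hχ⟩ := ihχ
    exact ⟨Ks ∪ Ks', Gs ∪ Gs', Ns ∪ Ns', hK.union hK', hG.union hG', hN.union hN',
      hψ.mono Set.subset_union_left Set.subset_union_left Set.subset_union_left,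
      hχ.mono Set.subset_union_right Set.subset_union_right Set.subset_union_right⟩

def PExpS.code (fK : K → ℕ) (fG : G → ℕ) (fN : N → ℕ) : PExpS K G N → ℕ
  | .key k => Nat.pair 0 (fK k)
  | .glob g => Nat.pair 1 (fG g)
  | .loc n => Nat.pair 2 (fN n)
  | .self => Nat.pair 3 0
  | .s p q => Nat.pair 4 (Nat.pair (p.code fK fG fN) (q.code fK fG fN))

theorem PExpS.code_injOn {Ks : Set K} {Gs : Set G} {Ns : Set N} {fK : K → ℕ} {fG : G → ℕ}
    {fN : N → ℕ} (hK : Set.InjOn fK Ks) (hG : Set.InjOn fG Gs) (hN : Set.InjOn fN Ns) :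
    Set.InjOn (PExpS.code fK fG fN) {p | p.Over Ks Gs Ns} := by
  intro p hp q hq h
  induction p generalizing q with
  | key k => cases q <;> simp_all [code, Nat.pair_eq_pair, Over, hK.eq_iff]
  | glob g => cases q <;> simp_all [code, Nat.pair_eq_pair, Over, hG.eq_iff]
  | loc n => cases q <;> simp_all [code, Nat.pair_eq_pair, Over, hN.eq_iff]
  | self => cases q <;> simp_all [code, Nat.pair_eq_pair]
  | s p₁ p₂ ih₁ ih₂ =>
    cases q <;> simp only [code, Nat.pair_eq_pair] at h <;> try omega
    case s q₁ q₂ =>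
      exact congrArg₂ _ (ih₁ hp.1 hq.1 h.2.1) (ih₂ hp.2 hq.2 h.2.2)

theorem PExpS.exists_injOn_over [Infinite K] {S Ks : Set K} {Gs : Set G} {Ns : Set N}
    (hS : S.Finite) (hK : Ks.Countable) (hG : Gs.Countable) (hN : Ns.Countable) :
    ∃ f : PExpS K G N → K, (∀ p, f p ∉ S) ∧ Set.InjOn f {p | p.Over Ks Gs Ns} := by
  obtain ⟨fK, hfK⟩ := Set.countable_iff_exists_injOn.mp hK
  obtain ⟨fG, hfG⟩ := Set.countable_iff_exists_injOn.mp hG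
  obtain ⟨fN, hfN⟩ := Set.countable_iff_exists_injOn.mp hN
  let e := hS.infinite_compl.natEmbedding
  exact ⟨fun p => e (p.code fK fG fN), fun p => (e _).2, fun p hp q hq h =>
    PExpS.code_injOn hfK hfG hfN hp hq (e.injective (Subtype.val_injective h))⟩

/-- Data of the canonical model when `K` is infinite: the symbols `Ks`, `Gs`, `Ns` of the formula
at hand, the key `khat` playing `self`, and fresh keys `wit p` standing for expressions `p` that are
not provably one of the named keys. -/
structure InfCanon (T : AxSelfTheory K G N) where
  Ks : Set K
  Gs : Set G
  Ns : Set N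
  khat : K
  wit : PExpS K G N → K
  key_bd_self_iff : ∀ k ∈ Ks, .key k ▷[T] .self ↔ k = khat
  wit_notMem : ∀ p, wit p ∉ insert khat Ks
  wit_injOn : Set.InjOn wit {p | p.Over Ks Gs Ns}

namespace InfCanon

variable {T : AxSelfTheory K G N} (C : InfCanon T)

def Good (p : PExpS K G N) : Prop := p.Over C.Ks C.Gs C.Ns

def Named (k : K) : Prop := k ∈ insert C.khat C.Ks

open Classical in
noncomputable def name (k : K) : PExpS K G N := if k = C.khat then .self else .key k

def Pinned (p : PExpS K G N) : Prop := ∃ k, C.Named k ∧ C.name k ▷[T] p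

def Fresh (p : PExpS K G N) : Prop := C.Good p ∧ T.IsNonempty p ∧ ¬ C.Pinned p

/-- The key `y` stands for the expression `P`. -/
def Names (y : K) (P : PExpS K G N) : Prop :=
  (C.Named y ∧ P = C.name y) ∨ (C.Fresh P ∧ y = C.wit P)

def den (α : PExpS K G N) : Set K := {y | ∃ P, C.Names y P ∧ α ▷[T] P}

def beta (g : G) : Set K := C.den (.glob g)

open Classical in
noncomputable def locDen (k : K) (n : N) : Set K :=
  if h : ∃ P, C.Names k P then C.den (h.choose.s (.loc n)) else ∅

variable {C}

theorem name_khat : C.name C.khat = .self := if_pos rfl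

theorem name_of_ne {k : K} (h : k ≠ C.khat) : C.name k = .key k := if_neg h

theorem not_named_wit (p : PExpS K G N) : ¬ C.Named (C.wit p) := C.wit_notMem p

theorem named_khat : C.Named C.khat := Set.mem_insert _ _

theorem named_of_mem {k : K} (hk : k ∈ C.Ks) : C.Named k := Set.mem_insert_of_mem _ hk

theorem name_equiv_key {k : K} (hk : k ∈ C.Ks) : C.name k ≈[T] .key k := by
  by_cases h : k = C.khat
  · rw [h, name_khat]
    have hks : .key C.khat ▷[T] .self := (C.key_bd_self_iff _ (h ▸ hk)).mpr rfl
    exact ⟨T.bd_key_of_key_bd T.isNonempty_self hks, hks⟩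
  · rw [name_of_ne h]; exact T.equiv_refl _

theorem good_name {k : K} (hk : C.Named k) : C.Good (C.name k) := by
  unfold name
  split_ifs with h
  · trivial
  · exact (Set.mem_insert_iff.mp hk).resolve_left h

theorem isNonempty_name (k : K) : T.IsNonempty (C.name k) := by
  unfold name
  split_ifs
  exacts [T.isNonempty_self, T.isNonempty_key k]

theorem bd_name_of_name_bd [Nonempty K] {α : PExpS K G N} {k : K} (hα : T.IsNonempty α)
    (h : C.name k ▷[T] α) : α ▷[T] C.name k := by
  unfold name at h ⊢
  split_ifs at h ⊢
  exacts [T.bd_self_of_self_bd hα h, T.bd_key_of_key_bd hα h]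

theorem eq_of_name_bd_name [Nonempty K] {k y : K} (hk : C.Named k) (hy : C.Named y)
    (h : C.name k ▷[T] C.name y) : k = y := by
  by_cases hkh : k = C.khat <;> by_cases hyh : y = C.khat
  · rw [hkh, hyh]
  · rw [hkh, name_khat, name_of_ne hyh] at h
    have hyK : y ∈ C.Ks := (Set.mem_insert_iff.mp hy).resolve_left hyh
    exact (hyh ((C.key_bd_self_iff y hyK).mp
      (T.bd_self_of_self_bd (T.isNonempty_key y) h))).elim
  · rw [hyh, name_khat, name_of_ne hkh] at h
    exact (hkh ((C.key_bd_self_iff k ((Set.mem_insert_iff.mp hk).resolve_left hkh)).mp h)).elim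
  · rw [name_of_ne hkh, name_of_ne hyh] at h
    exact T.eq_of_key_bd_key h

theorem names_khat : C.Names C.khat .self := Or.inl ⟨named_khat, name_khat.symm⟩

theorem names_name {k : K} (hk : C.Named k) : C.Names k (C.name k) := Or.inl ⟨hk, rfl⟩

theorem Names.good {y : K} {P : PExpS K G N} (h : C.Names y P) : C.Good P := by
  rcases h with ⟨hy, rfl⟩ | ⟨hP, -⟩
  exacts [good_name hy, hP.1]

theorem Names.isNonempty {y : K} {P : PExpS K G N} (h : C.Names y P) : T.IsNonempty P := by
  rcases h with ⟨-, rfl⟩ | ⟨hP, -⟩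
  exacts [isNonempty_name y, hP.2.1]

theorem Names.unique {y : K} {P P' : PExpS K G N} (h : C.Names y P) (h' : C.Names y P') :
    P = P' := by
  rcases h with ⟨hy, rfl⟩ | ⟨hP, rfl⟩ <;> rcases h' with ⟨hy', rfl⟩ | ⟨hP', hy'⟩
  · rfl
  · exact (not_named_wit P' (hy' ▸ hy)).elim
  · exact (not_named_wit P hy').elim
  · exact C.wit_injOn hP.1 hP'.1 hy'

theorem exists_names_equiv [Nonempty K] {α : PExpS K G N} (hg : C.Good α)
    (hα : T.IsNonempty α) : ∃ y P, C.Names y P ∧ α ≈[T] P := by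
  by_cases hpin : C.Pinned α
  · obtain ⟨k, hk, h⟩ := hpin
    exact ⟨k, _, names_name hk, bd_name_of_name_bd hα h, h⟩
  · exact ⟨C.wit α, α, Or.inr ⟨⟨hg, hα, hpin⟩, rfl⟩, T.equiv_refl α⟩

theorem den_anti {α β : PExpS K G N} (h : α ▷[T] β) : C.den β ⊆ C.den α :=
  fun _ ⟨P, hP, hβ⟩ => ⟨P, hP, T.bd_trans h hβ⟩

theorem den_congr {α β : PExpS K G N} (h : α ≈[T] β) : C.den α = C.den β :=
  (den_anti h.2).antisymm (den_anti h.1)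

theorem Names.mem_den {y : K} {P : PExpS K G N} (h : C.Names y P) : y ∈ C.den P :=
  ⟨P, h, T.bd_refl P⟩

theorem isNonempty_of_mem_den {y : K} {α : PExpS K G N} (h : y ∈ C.den α) : T.IsNonempty α :=
  let ⟨_, hP, hα⟩ := h
  hP.isNonempty.mono hα

theorem den_name [Nonempty K] {k : K} (hk : C.Named k) : C.den (C.name k) = {k} := by
  refine Set.eq_singleton_iff_unique_mem.mpr ⟨(names_name hk).mem_den, ?_⟩
  rintro y ⟨P, ⟨hy, rfl⟩ | ⟨⟨-, -, hpin⟩, -⟩, h⟩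
  · exact (eq_of_name_bd_name hk hy h).symm
  · exact (hpin ⟨k, hk, h⟩).elim

theorem den_key [Nonempty K] {k : K} (hk : k ∈ C.Ks) : C.den (.key k) = {k} := by
  rw [← den_congr (name_equiv_key hk), den_name (named_of_mem hk)]

theorem den_self [Nonempty K] : C.den .self = {C.khat} := by
  rw [← name_khat, den_name named_khat]

theorem locDen_of_names {k : K} {P : PExpS K G N} (h : C.Names k P) (n : N) :
    C.locDen k n = C.den (P.s (.loc n)) := by
  have hex : ∃ P, C.Names k P := ⟨P, h⟩
  rw [locDen, dif_pos hex, hex.choose_spec.unique h]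

theorem biUnion_den [Nonempty K] {α e : PExpS K G N} (hα : C.Good α) {f : K → Set K}
    (hf : ∀ y P, C.Names y P → f y = C.den (P.s e)) : ⋃ y ∈ C.den α, f y = C.den (α.s e) := by
  refine subset_antisymm (Set.iUnion₂_subset fun y ⟨P, hP, hαP⟩ => ?_) fun x hx => ?_
  · rw [hf y P hP]
    exact den_anti (T.s_bd_s e hαP)
  · obtain ⟨y, P, hP, hαP⟩ := exists_names_equiv hα (isNonempty_of_mem_den hx).of_s
    refine Set.mem_biUnion (⟨P, hP, hαP.1⟩ : y ∈ C.den α) ?_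
    rwa [hf y P hP, ← den_congr (hαP.s_left e)]

variable [Nonempty K] (φ : FmlS K G N)

/-- `SelfOnly` expressions are excluded: they denote `{k}`, while `den P` is larger than `{k}`
when `k` is a fresh key. -/
theorem interpS_eq_den {e : PExpS K G N} (he : C.Good e) (hs : ¬ e.SelfOnly) {k : K}
    {P : PExpS K G N} (hP : C.Names k P) :
    interpS (T.world φ C.beta) C.locDen e k = C.den (P.s e) := by
  induction e generalizing k P with
  | key k' => rw [den_congr (hP.isNonempty.s_equiv (g := .key k') trivial), den_key he]; rfl
  | glob g => rw [den_congr (hP.isNonempty.s_equiv (g := .glob g) trivial)]; rfl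
  | loc n => exact locDen_of_names hP n
  | self => exact (hs trivial).elim
  | s e₁ e₂ ih₁ ih₂ =>
    by_cases hs₂ : e₂.SelfOnly
    · rw [interpS_s_of_selfOnly_right hs₂, ih₁ he.1 (fun h => hs ⟨h, hs₂⟩) hP]
      exact den_congr ((T.s_assoc P e₁ e₂).symm.trans (T.s_equiv_of_selfOnly hs₂ _)).symm
    by_cases hs₁ : e₁.SelfOnly
    · rw [interpS_s_of_selfOnly_left hs₁, ih₂ he.2 hs₂ hP]
      exact den_congr ((T.s_assoc P e₁ e₂).symm.trans
        ((T.s_equiv_of_selfOnly hs₁ P).s_left e₂)).symm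
    · rw [interpS_s, ih₁ he.1 hs₁ hP,
        biUnion_den (α := P.s e₁) ⟨hP.good, he.1⟩ fun y Q hQ => ih₂ he.2 hs₂ hQ]
      exact den_congr (T.s_assoc P e₁ e₂)

theorem interpS_subset_den {e : PExpS K G N} (he : C.Good e) {k : K} {P : PExpS K G N}
    (hP : C.Names k P) : interpS (T.world φ C.beta) C.locDen e k ⊆ C.den (P.s e) := by
  by_cases hs : e.SelfOnly
  · rw [interpS_of_selfOnly hs, Set.singleton_subset_iff, den_congr (T.s_equiv_of_selfOnly hs P)]
    exact hP.mem_den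
  · exact (interpS_eq_den φ he hs hP).subset

theorem interpS_khat {p : PExpS K G N} (hp : C.Good p) :
    interpS (T.world φ C.beta) C.locDen p C.khat = C.den p := by
  by_cases hs : p.SelfOnly
  · rw [interpS_of_selfOnly hs, den_congr (T.equiv_self_of_selfOnly hs), den_self]
  · rw [interpS_eq_den φ hp hs names_khat, den_congr (T.self_s p)]

theorem den_subset_den_iff {p q : PExpS K G N} (hq : C.Good q) :
    C.den q ⊆ C.den p ↔ p ▷[T] q := by
  refine ⟨fun h => ?_, den_anti⟩
  by_contra hpq
  obtain ⟨y, P, hP, hqP⟩ := exists_names_equiv hq (T.isNonempty_of_not_bd hpq)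
  obtain ⟨P', hP', hpP'⟩ := h ⟨P, hP, hqP.1⟩
  exact hpq (T.bd_trans (hP'.unique hP ▸ hpP') hqP.2)

variable {φ}

theorem consistentS_world (hφ : φ.Over C.Ks C.Gs C.Ns) :
    ConsistentS (T.world φ C.beta) C.locDen := by
  refine AxSelfTheory.consistentS_world fun k n p hsub h => ?_
  obtain ⟨hk, -, hp⟩ := FmlS.Over.of_mem_subformulas hφ hsub
  have hname := names_name (named_of_mem hk)
  have heq := name_equiv_key hk
  refine (interpS_subset_den φ hp hname).trans ?_
  rw [locDen_of_names hname]
  exact den_anti (T.bd_trans (heq.s_left _).1 (T.bd_trans h (heq.s_left _).2))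

theorem satS_world_khat_iff (hφ : φ.Over C.Ks C.Gs C.Ns) :
    SatS (T.world φ C.beta) C.locDen C.khat φ ↔ T.Holds φ :=
  AxSelfTheory.satS_world_iff fun p q hsub => by
    obtain ⟨hp, hq⟩ := FmlS.Over.of_mem_subformulas hφ hsub
    rw [satS_bdto, interpS_khat φ hp, interpS_khat φ hq]
    exact den_subset_den_iff hq

end InfCanon

theorem AxSelfTheory.exists_key_bd_self_iff [Infinite K] (T : AxSelfTheory K G N) {Ks : Set K}
    (hK : Ks.Finite) : ∃ khat, ∀ k ∈ Ks, .key k ▷[T] .self ↔ k = khat := by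
  by_cases h : ∃ k ∈ Ks, .key k ▷[T] .self
  · obtain ⟨k₀, -, h₀⟩ := h
    have hself := T.bd_key_of_key_bd T.isNonempty_self h₀
    exact ⟨k₀, fun k _ => ⟨fun hk => T.eq_of_key_bd_key (T.bd_trans hk hself), fun e => e ▸ h₀⟩⟩
  · push Not at h
    obtain ⟨khat, hkhat⟩ := hK.infinite_compl.nonempty
    exact ⟨khat, fun k hk => ⟨fun h' => (h k hk h').elim, fun e => (hkhat (e ▸ hk)).elim⟩⟩

theorem InfCanon.exists_of_finite [Infinite K] (T : AxSelfTheory K G N) {Ks : Set K}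
    {Gs : Set G} {Ns : Set N} (hK : Ks.Finite) (hG : Gs.Countable) (hN : Ns.Countable) :
    ∃ C : InfCanon T, C.Ks = Ks ∧ C.Gs = Gs ∧ C.Ns = Ns := by
  obtain ⟨khat, hkhat⟩ := T.exists_key_bd_self_iff hK
  obtain ⟨wit, hwit, hinj⟩ := PExpS.exists_injOn_over (hK.insert khat) hK.countable hG hN
  exact ⟨⟨Ks, Gs, Ns, khat, wit, hkhat, hwit, hinj⟩, rfl, rfl, rfl⟩

theorem AxSelfTheory.exists_model_of_infinite [Infinite K] (T : AxSelfTheory K G N)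
    (φ : FmlS K G N) : ∃ w l k, ConsistentS w l ∧ (SatS w l k φ ↔ T.Holds φ) := by
  obtain ⟨Ks, Gs, Ns, hK, hG, hN, hφ⟩ := φ.exists_finite_over
  obtain ⟨C, rfl, rfl, rfl⟩ := InfCanon.exists_of_finite T hK hG.countable hN.countable
  exact ⟨_, _, _, C.consistentS_world hφ, C.satS_world_khat_iff hφ⟩

theorem prvSInf_of_oValidS [Infinite K] {φ : FmlS K G N} (h : OValidS φ) : PrvSInf φ := by
  by_contra hφ
  obtain ⟨T, -, hT⟩ := AxSelfTheory.exists_not_holds .taut .mp id hφ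
  obtain ⟨w, l, k, hl, hsat⟩ := T.exists_model_of_infinite φ
  exact h ⟨w, l, k, mt hsat.mp hT, hl⟩

theorem prvSFin_of_oValidS [Finite K] [Nonempty K] {φ : FmlS K G N} (h : OValidS φ) :
    PrvSFin φ := by
  by_contra hφ
  obtain ⟨T, hfin, hT⟩ := AxSelfTheory.exists_not_holds .taut .mp PrvSInf.toPrvSFin hφ
  obtain ⟨w, l, k, hl, hsat⟩ := AxSelfTheory.exists_model_of_finite hfin φ
  exact h ⟨w, l, k, mt hsat.mp hT, hl⟩

/-- Theorem 6.1: `AX_inf^self` (for infinite `K`) and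
`AX_fin^self` (for finite `K`) are sound and complete for LLNC^self with
respect to the open semantics. -/
theorem axSelf_sound_complete [Nonempty K] (φ : FmlS K G N) :
    (Infinite K → (PrvSInf φ ↔ OValidS φ)) ∧
    (Finite K → (PrvSFin φ ↔ OValidS φ)) :=
  ⟨fun _ => ⟨fun h => h.toPrvSFin.oValidS, prvSInf_of_oValidS⟩,
    fun _ => ⟨PrvSFin.oValidS, prvSFin_of_oValidS⟩⟩
end

section
/- Monotone step between semantics over growing worlds: for every world w, all worlds w' ≥ w, every principal expression p, and all keys k₁, k₂: if w,k₂ ⊨_c p ▷ k₁ then w',k₂ ⊨_c p ▷ k₁ (the implication from condition (2) to condition (3) of Theorem 4.1). -/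
/-- Principal expressions over keys `K`, global names `G`, local names `N`. -/
inductive PExp (K G N : Type*) where
  | key : K → PExp K G N
  | glob : G → PExp K G N
  | loc : N → PExp K G N
  | s : PExp K G N → PExp K G N → PExp K G N

/-- Formulas of LLNC. -/
inductive Fml (K G N : Type*) where
  | bdto : PExp K G N → PExp K G N → Fml K G N
  | cert : K → Fml K G N → Fml K G N
  | not : Fml K G N → Fml K G N
  | and : Fml K G N → Fml K G N → Fml K G N

/-- A world: an interpretation of global names and an assignment of
certificates to keys, with only finitely many certificates issued. -/
structure World (K G N : Type*) where
  beta : G → Set K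
  certs : K → Set (Fml K G N)
  finite_certs : (⋃ k, certs k).Finite

variable {K G N : Type*}

/-- The interpretation of a principal expression relative to a world, a
local name assignment, and a key. -/
def interp (w : World K G N) (l : K → N → Set K) : PExp K G N → K → Set K
  | .key k', _ => {k'}
  | .glob g, _ => w.beta g
  | .loc n, k => l k n
  | .s p q, k => ⋃ k' ∈ interp w l p k, interp w l q k'

/-- Satisfaction of a formula at a world, local name assignment, and key. -/
def Sat (w : World K G N) (l : K → N → Set K) (k : K) : Fml K G N → Prop
  | .bdto p q => interp w l q k ⊆ interp w l p k
  | .cert k' φ => φ ∈ w.certs k'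
  | .not φ => ¬ Sat w l k φ
  | .and φ ψ => Sat w l k φ ∧ Sat w l k ψ

/-- A local name assignment is consistent with a world if every issued
binding certificate holds at the issuer. -/
def Consistent (w : World K G N) (l : K → N → Set K) : Prop :=
  ∀ (k : K) (n : N) (p : PExp K G N),
    Fml.bdto (.loc n) p ∈ w.certs k → Sat w l k (.bdto (.loc n) p)

/-- `lw` is the (unique) minimal local name assignment consistent with `w`. -/
def IsMinConsistent (w : World K G N) (lw : K → N → Set K) : Prop :=
  Consistent w lw ∧ ∀ l, Consistent w l → ∀ (k : K) (n : N), lw k n ⊆ l k n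

/-- Open-semantics satisfaction: satisfaction with a consistent assignment. -/
def OSat (w : World K G N) (l : K → N → Set K) (k : K) (φ : Fml K G N) : Prop :=
  Sat w l k φ ∧ Consistent w l

/-- `φ` is o-satisfiable. -/
def OSatisfiable (φ : Fml K G N) : Prop :=
  ∃ (w : World K G N) (l : K → N → Set K) (k : K), OSat w l k φ

/-- `φ` is o-valid: no triple satisfies `¬φ` under the open semantics. -/
def OValid (φ : Fml K G N) : Prop :=
  ¬ ∃ (w : World K G N) (l : K → N → Set K) (k : K), OSat w l k (.not φ)

/-- `φ` is c-satisfiable: some world and key satisfy it under the minimal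
consistent local name assignment of the world. -/
def CSatisfiable (φ : Fml K G N) : Prop :=
  ∃ (w : World K G N) (k : K) (lw : K → N → Set K), IsMinConsistent w lw ∧ Sat w lw k φ

/-- `φ` is c-valid: every world and key satisfy it under the minimal
consistent local name assignment of the world. -/
def CValid (φ : Fml K G N) : Prop :=
  ∀ (w : World K G N) (k : K) (lw : K → N → Set K), IsMinConsistent w lw → Sat w lw k φ

/-- The ordering on worlds: `WorldLE w w'` (i.e. `w' ≥ w`) iff `w'` has more
bindings of global names and more certificates. -/
def WorldLE (w w' : World K G N) : Prop :=
  (∀ g : G, w.beta g ⊆ w'.beta g) ∧ (∀ k : K, w.certs k ⊆ w'.certs k)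

/-! A larger world imposes more binding constraints, each with a larger right-hand side, so every
assignment consistent with `w'` is consistent with `w`; minimality then gives `lw ≤ lw'`. Since
`⟦·⟧` is monotone in `β` and in the local name assignment, membership `k₁ ∈ ⟦p⟧` survives. -/

theorem interp_mono {w w' : World K G N} (hβ : ∀ g, w.beta g ⊆ w'.beta g)
    {l l' : K → N → Set K} (hl : ∀ k n, l k n ⊆ l' k n) :
    ∀ (p : PExp K G N) (k : K), interp w l p k ⊆ interp w' l' p k
  | .key _, _ => subset_rfl
  | .glob g, _ => hβ g
  | .loc n, k => hl k n
  | .s p q, k => Set.biUnion_mono (interp_mono hβ hl p k) fun k' _ => interp_mono hβ hl q k'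

theorem Consistent.of_worldLE {w w' : World K G N} (hle : WorldLE w w') {l : K → N → Set K}
    (hl : Consistent w' l) : Consistent w l := fun k n p hp =>
  (interp_mono hle.1 (fun _ _ => subset_rfl) p k).trans (hl k n p (hle.2 k hp))

theorem IsMinConsistent.le_of_worldLE {w w' : World K G N} (hle : WorldLE w w')
    {lw lw' : K → N → Set K} (hlw : IsMinConsistent w lw) (hlw' : IsMinConsistent w' lw') :
    ∀ k n, lw k n ⊆ lw' k n :=
  hlw.2 lw' (hlw'.1.of_worldLE hle)

theorem csat_monotone_world_general (w w' : World K G N)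
    (hle : WorldLE w w') (p : PExp K G N) (k₁ k₂ : K)
    (lw : K → N → Set K) (hlw : IsMinConsistent w lw)
    (lw' : K → N → Set K) (hlw' : IsMinConsistent w' lw')
    (h : Sat w lw k₂ (.bdto p (.key k₁))) :
    Sat w' lw' k₂ (.bdto p (.key k₁)) :=
  h.trans (interp_mono hle.1 (hlw.le_of_worldLE hle hlw') p k₂)

/-- growing the world preserves closed-semantics facts
`p ▷ k₁` (the implication (2) ⇒ (3) of Theorem 4.1). -/
theorem csat_monotone_world [Nonempty K] (w w' : World K G N)
    (hle : WorldLE w w') (p : PExp K G N) (k₁ k₂ : K)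
    (lw : K → N → Set K) (hlw : IsMinConsistent w lw)
    (lw' : K → N → Set K) (hlw' : IsMinConsistent w' lw')
    (h : Sat w lw k₂ (.bdto p (.key k₁))) :
    Sat w' lw' k₂ (.bdto p (.key k₁)) :=
  csat_monotone_world_general w w' hle p k₁ k₂ lw hlw lw' hlw' h
end
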